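/- If F: E → ℝ≥0 is an edge-weight function on a finite connected graph G, then the connection value F(·,·) restricted to the set of regional minima of F is an ultrametric distance: it is symmetric, nonnegative, satisfies F(X,X)=0 and F(X,Y)=0 implies X=Y for distinct minima X,Y, and F(X,Y) ≤ max(F(X,Z), F(Z,Y)) for all minima X,Y,Z. -/

import Mathlib

open SimpleGraph

variable {V : Type*} [Fintype V] [DecidableEq V]

/-- The subgraph of `G` induced by a set `S` of edges: its edges are the edges of `G`
belonging to `S`, and its vertices are the endpoints of those edges. -/
def edgeInduced (G : SimpleGraph V) (S : Set (Sym2 V)) : G.Subgraph where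
  verts := {x | ∃ y, G.Adj x y ∧ s(x, y) ∈ S}
  Adj x y := G.Adj x y ∧ s(x, y) ∈ S
  adj_sub h := h.1
  edge_vert h := ⟨_, h⟩
  symm := ⟨fun x y h => ⟨h.1.symm, by rw [Sym2.eq_swap]; exact h.2⟩⟩

/-- The edge-closing `φ`: `φ(X)` has the same vertices as `X` and all edges of `G`
with both endpoints in `X`. -/
def phi (G : SimpleGraph V) (X : G.Subgraph) : G.Subgraph where
  verts := X.verts
  Adj x y := G.Adj x y ∧ x ∈ X.verts ∧ y ∈ X.verts
  adj_sub h := h.1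
  edge_vert h := h.2.1
  symm := ⟨fun x y h => ⟨h.1.symm, h.2.2, h.2.1⟩⟩

/-- The connected component of the subgraph `S` containing the vertex `x`. -/
def compOf (G : SimpleGraph V) (S : G.Subgraph) (x : V) : G.Subgraph where
  verts := {y ∈ S.verts | S.spanningCoe.Reachable x y}
  Adj a b := S.Adj a b ∧ S.spanningCoe.Reachable x a
  adj_sub h := S.adj_sub h.1
  edge_vert h := ⟨S.edge_vert h.1, h.2⟩
  symm := ⟨fun a b h => ⟨h.1.symm, h.2.trans (SimpleGraph.Adj.reachable (by exact h.1))⟩⟩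

/-- A set `C` of edges of `G` is a cut if every edge of `C` joins two distinct
nonempty connected components of the graph induced by the complementary edges. -/
def IsCut (G : SimpleGraph V) (C : Set (Sym2 V)) : Prop :=
  ∀ x y, G.Adj x y → s(x, y) ∈ C →
    x ∈ (edgeInduced G (G.edgeSet \ C)).verts ∧
    y ∈ (edgeInduced G (G.edgeSet \ C)).verts ∧
    ¬ (edgeInduced G (G.edgeSet \ C)).spanningCoe.Reachable x y

/-- A subgraph `S` of `G` is a segmentation if the complement of its edge set is a cut. -/
def IsSegmentation (G : SimpleGraph V) (S : G.Subgraph) : Prop :=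
  IsCut G (G.edgeSet \ S.edgeSet)

/-- Number of connected components of a subgraph. -/
noncomputable def numComp (G : SimpleGraph V) (S : G.Subgraph) : ℕ :=
  Nat.card S.coe.ConnectedComponent

/-- Adding the edge `{x, y}` (and its endpoints) to the subgraph `X`. -/
def addEdge (G : SimpleGraph V) (X : G.Subgraph) {x y : V} (h : G.Adj x y) : G.Subgraph where
  verts := X.verts ∪ {x, y}
  Adj a b := X.Adj a b ∨ s(a, b) = s(x, y)
  adj_sub := by
    rintro a b (hab | hab)
    · exact X.adj_sub hab
    · rcases Sym2.eq_iff.mp hab with ⟨rfl, rfl⟩ | ⟨rfl, rfl⟩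
      · exact h
      · exact h.symm
  edge_vert := by
    rintro a b (hab | hab)
    · exact Or.inl (X.edge_vert hab)
    · rcases Sym2.eq_iff.mp hab with ⟨rfl, rfl⟩ | ⟨rfl, rfl⟩
      · exact Or.inr (by simp)
      · exact Or.inr (by simp)
  symm := by
    constructor
    rintro a b (hab | hab)
    · exact Or.inl hab.symm
    · right; rwa [Sym2.eq_swap]

/-- The edge `{x, y}` is W-simple for `X` if adding it does not change the number
of connected components. -/
def WSimple (G : SimpleGraph V) (X : G.Subgraph) {x y : V} (h : G.Adj x y) : Prop :=
  numComp G (addEdge G X h) = numComp G X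

/-- `X` is a binary watershed of `G` if no edge outside of `X` is W-simple for `X`. -/
def BinaryWatershed (G : SimpleGraph V) (X : G.Subgraph) : Prop :=
  ∀ x y (h : G.Adj x y), s(x, y) ∉ X.edgeSet → ¬ WSimple G X h

/-- The cross-section `F[l]`: the subgraph induced by the edges of weight at most `l`. -/
def levelSub (G : SimpleGraph V) (F : Sym2 V → NNReal) (l : NNReal) : G.Subgraph :=
  edgeInduced G {e | F e ≤ l}

/-- The connection value between `x` and `y`: the least level `l` such that `x` and `y`
lie in the same connected component of `F[l]`. -/
noncomputable def connVal (G : SimpleGraph V) (F : Sym2 V → NNReal) (x y : V) : NNReal :=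
  sInf {l | (levelSub G F l).spanningCoe.Reachable x y}

/-- The edge `{x, y}` is W-destructible for `F` with lowest value `l0`. -/
def WDestructible (G : SimpleGraph V) (F : Sym2 V → NNReal) {x y : V} (h : G.Adj x y)
    (l0 : NNReal) : Prop :=
  (∀ l1, l0 < l1 → l1 ≤ F s(x, y) → WSimple G (levelSub G F l1) h) ∧
    ¬ WSimple G (levelSub G F l0) h

/-- `F` is a topological watershed if it has no W-destructible edge. -/
def TopologicalWatershed (G : SimpleGraph V) (F : Sym2 V → NNReal) : Prop :=
  ∀ x y (h : G.Adj x y) (l0 : NNReal), ¬ WDestructible G F h l0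

/-- A regional minimum of `F`: a connected component `X` of some cross-section `F[l]`
containing no edge of weight `< l`. -/
def IsMinimum (G : SimpleGraph V) (F : Sym2 V → NNReal) (X : G.Subgraph) : Prop :=
  ∃ (l : NNReal) (x : V), x ∈ (levelSub G F l).verts ∧ X = compOf G (levelSub G F l) x ∧
    ∀ l1 < l, ∀ e ∈ X.edgeSet, ¬ F e ≤ l1

/-- The graph `M(F)`, union of all the regional minima of `F`. -/
def minimaGraph (G : SimpleGraph V) (F : Sym2 V → NNReal) : G.Subgraph where
  verts := {x | ∃ X, IsMinimum G F X ∧ x ∈ X.verts}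
  Adj a b := ∃ X, IsMinimum G F X ∧ X.Adj a b
  adj_sub := by rintro a b ⟨X, _, hab⟩; exact X.adj_sub hab
  edge_vert := by rintro a b ⟨X, hX, hab⟩; exact ⟨X, hX, X.edge_vert hab⟩
  symm := by constructor; rintro a b ⟨X, hX, hab⟩; exact ⟨X, hX, hab.symm⟩

/-- Connection value between two subgraphs: `F(X,Y) = min {F(x,y) : x ∈ X, y ∈ Y}`. -/
noncomputable def connValSub (G : SimpleGraph V) (F : Sym2 V → NNReal)
    (X Y : G.Subgraph) : NNReal :=
  sInf {l | ∃ x ∈ X.verts, ∃ y ∈ Y.verts, connVal G F x y = l}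

/-- An ultrametric watershed: a topological watershed which is null on all its minima. -/
def UltrametricWatershed (G : SimpleGraph V) (F : Sym2 V → NNReal) : Prop :=
  TopologicalWatershed G F ∧ ∀ X, IsMinimum G F X → ∀ e ∈ X.edgeSet, F e = 0

/-- The regions of a segmentation `S`: its connected components. -/
def Regions (G : SimpleGraph V) (S : G.Subgraph) : Set G.Subgraph :=
  {X | ∃ x ∈ S.verts, X = compOf G S x}

/-- A hierarchical segmentation on `G`: an indexed hierarchy `(H, μ)` on the set of
regions of a segmentation `S` of `G` such that the edge-closing of the union of the
regions of each member of the hierarchy is connected. -/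
structure HierSeg {V : Type*} [Fintype V] [DecidableEq V] (G : SimpleGraph V) where
  S : G.Subgraph
  seg : IsSegmentation G S
  H : Set (Set G.Subgraph)
  hsub : ∀ h ∈ H, h ⊆ Regions G S
  htop : Regions G S ∈ H
  hsing : ∀ X ∈ Regions G S, {X} ∈ H
  hnest : ∀ h ∈ H, ∀ h' ∈ H, (h ∩ h').Nonempty → h ⊆ h' ∨ h' ⊆ h
  mu : Set G.Subgraph → NNReal
  mu_zero : ∀ h ∈ H, (mu h = 0 ↔ ∃ X, h = {X})
  mu_mono : ∀ h ∈ H, ∀ h' ∈ H, h ⊂ h' → mu h < mu h'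
  mu_out : ∀ h ∉ H, mu h = 0
  hconn : ∀ h ∈ H, (phi G (sSup h)).Connected

/-- `H[l]`: the graph induced by the (edge-closed unions of regions of the) members
of the hierarchy at level at most `l`. -/
def HLevel (G : SimpleGraph V) (HS : HierSeg G) (l : NNReal) : G.Subgraph :=
  sSup {K | ∃ h ∈ HS.H, HS.mu h ≤ l ∧ K = phi G (sSup h)}

/-- The saliency map of a hierarchical segmentation. -/
noncomputable def saliencyMap (G : SimpleGraph V) (HS : HierSeg G) : Sym2 V → NNReal :=
  fun e => sInf {l | e ∈ (HLevel G HS l).edgeSet}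

/-- The ultrametric opening `Ψ`. -/
noncomputable def psi (G : SimpleGraph V) (F : Sym2 V → NNReal) : Sym2 V → NNReal :=
  Sym2.lift ⟨fun x y => connVal G F x y, fun x y => by
    have hs : {l | (levelSub G F l).spanningCoe.Reachable x y} =
        {l | (levelSub G F l).spanningCoe.Reachable y x} := by
      ext l
      exact ⟨fun hr => hr.symm, fun hr => hr.symm⟩
    show sInf _ = sInf _
    rw [hs]⟩

/-- Altitude of the lowest component of `F` containing `x`. -/
noncomputable def vertAlt (G : SimpleGraph V) (F : Sym2 V → NNReal) (x : V) : NNReal :=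
  sInf {l | x ∈ (levelSub G F l).verts}

/-- `x` and `y` are `l`-separated for `F`. -/
def SeparatedAt (G : SimpleGraph V) (F : Sym2 V → NNReal) (x y : V) (l : NNReal) : Prop :=
  connVal G F x y = l ∧ max (vertAlt G F x) (vertAlt G F y) < l

/-- `F'` is a separation of `F`. -/
def IsSeparation (G : SimpleGraph V) (F F' : Sym2 V → NNReal) : Prop :=
  ∀ x y l, SeparatedAt G F x y l → SeparatedAt G F' x y l

/-- `C` is a connected component of the cross-section `F[l]`. -/
def IsCompAt (G : SimpleGraph V) (F : Sym2 V → NNReal) (l : NNReal) (C : G.Subgraph) : Prop :=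
  ∃ x ∈ (levelSub G F l).verts, C = compOf G (levelSub G F l) x

/-- `h(C)`: the smallest level at which `C` is a component of `F`. -/
noncomputable def hVal (G : SimpleGraph V) (F : Sym2 V → NNReal) (C : G.Subgraph) : NNReal :=
  sInf {l | IsCompAt G F l C}


/-!
The connection value is attained, since only finitely many cross-sections `F[λ]` occur, so it
is an ultrametric on the vertices of a connected graph. A regional minimum `Z` is a component
of some `F[λ]`: its vertices are pairwise connected at level `λ`, while any vertex outside `Z`
has connection value `> λ` to `Z`. Two minima sharing a vertex coincide: the one of lower level
lies inside the other, and its edges have weight equal to both levels. Hence, for distinct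
minima `X ≠ Z`, entering `Z` from `x ∈ X` at one vertex and leaving it from another costs
nothing beyond `F(X, Z)`, which gives the ultrametric inequality; and `F(X, Y) = 0` forces
`X` and `Y` to share a vertex.
-/

theorem csInf_mem_of_finite_coinitial {α : Type*} [ConditionallyCompleteLinearOrder α]
    {S T : Set α} (hT : T.Finite) (hTS : T ⊆ S) (hST : ∀ s ∈ S, ∃ t ∈ T, t ≤ s)
    (hS : S.Nonempty) : sInf S ∈ S := by
  obtain ⟨s, hs⟩ := hS
  obtain ⟨t, ht, -⟩ := hST s hs
  obtain ⟨t₀, ht₀, ht₀_min⟩ := Set.exists_min_image T id hT ⟨t, ht⟩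
  refine IsLeast.csInf_mem ⟨hTS ht₀, fun s hs => ?_⟩
  obtain ⟨t, ht, hts⟩ := hST s hs
  exact (ht₀_min t ht).trans hts

section

variable {V : Type*} {G : SimpleGraph V}

theorem SimpleGraph.Subgraph.mem_verts_of_reachable_spanningCoe {S : G.Subgraph} {z w : V}
    (h : S.spanningCoe.Reachable z w) (hz : z ∈ S.verts) : w ∈ S.verts := by
  obtain ⟨p⟩ := h.symm
  cases p with
  | nil => exact hz
  | cons hadj _ => exact S.edge_vert hadj

theorem reachable_of_mem_compOf {S : G.Subgraph} {x z z' : V}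
    (hz : z ∈ (compOf G S x).verts) (hz' : z' ∈ (compOf G S x).verts) :
    S.spanningCoe.Reachable z z' :=
  hz.2.symm.trans hz'.2

theorem mem_compOf_of_reachable {S : G.Subgraph} {x z w : V}
    (hz : z ∈ (compOf G S x).verts) (h : S.spanningCoe.Reachable z w) :
    w ∈ (compOf G S x).verts :=
  ⟨SimpleGraph.Subgraph.mem_verts_of_reachable_spanningCoe h hz.1, hz.2.trans h⟩

theorem compOf_le_compOf {S T : G.Subgraph} (hST : S ≤ T) {x y v : V}
    (hvS : v ∈ (compOf G S x).verts) (hvT : v ∈ (compOf G T y).verts) :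
    compOf G S x ≤ compOf G T y := by
  have hreach : ∀ u, S.spanningCoe.Reachable x u → T.spanningCoe.Reachable y u := fun u hu =>
    hvT.2.trans ((hvS.2.symm.trans hu).mono (Subgraph.spanningCoe_le_of_le hST))
  exact ⟨fun u hu => ⟨hST.1 hu.1, hreach u hu.2⟩,
    fun a b hab => ⟨hST.2 hab.1, hreach a hab.2⟩⟩

variable (G) (F : Sym2 V → NNReal)

theorem levelSub_mono : Monotone (levelSub G F) :=
  fun _ _ hl => ⟨fun _ ⟨y, hxy, hF⟩ => ⟨y, hxy, hF.trans hl⟩,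
    fun _ _ ⟨hxy, hF⟩ => ⟨hxy, hF.trans hl⟩⟩

variable {G F}

theorem SimpleGraph.Reachable.levelSub_mono {l l' : NNReal} (hl : l ≤ l') {x y : V}
    (h : (levelSub G F l).spanningCoe.Reachable x y) :
    (levelSub G F l').spanningCoe.Reachable x y :=
  h.mono (Subgraph.spanningCoe_le_of_le (_root_.levelSub_mono G F hl))

theorem levelSub_congr {l l' : NNReal} (h : ∀ e, F e ≤ l ↔ F e ≤ l') :
    levelSub G F l = levelSub G F l' := by
  unfold levelSub
  congr 1
  exact Set.ext h

theorem spanningCoe_levelSub_of_forall_le {l : NNReal} (h : ∀ e, F e ≤ l) :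
    (levelSub G F l).spanningCoe = G := by
  ext x y
  exact ⟨fun hxy => hxy.1, fun hxy => ⟨hxy, h _⟩⟩

theorem connVal_le {l : NNReal} {x y : V} (h : (levelSub G F l).spanningCoe.Reachable x y) :
    connVal G F x y ≤ l :=
  csInf_le (OrderBot.bddBelow _) h

theorem connVal_comm (x y : V) : connVal G F x y = connVal G F y x := by
  simp only [connVal, SimpleGraph.reachable_comm]

theorem connVal_self (x : V) : connVal G F x x = 0 :=
  nonpos_iff_eq_zero.1 (connVal_le (SimpleGraph.Reachable.refl x))

theorem levelSub_sSup_image_le [Finite V] (l : NNReal) :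
    levelSub G F (sSup (F '' {e | F e ≤ l})) = levelSub G F l := by
  refine levelSub_congr fun e => ⟨fun he => he.trans ?_, fun he => ?_⟩
  · exact csSup_le' (Set.forall_mem_image.2 fun _ h => h)
  · exact le_csSup (Set.toFinite _).bddAbove (Set.mem_image_of_mem F he)

theorem reachable_levelSub_connVal [Finite V] {x y : V} (h : G.Reachable x y) :
    (levelSub G F (connVal G F x y)).spanningCoe.Reachable x y := by
  obtain ⟨lmax, hlmax⟩ := (Set.finite_range F).bddAbove
  -- each admissible level `l` may be lowered to the largest edge weight `≤ l`
  refine csInf_mem_of_finite_coinitial (S := {l | (levelSub G F l).spanningCoe.Reachable x y})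
    (T := _ ∩ Set.range fun s => sSup (F '' s))
    ((Set.finite_range _).subset Set.inter_subset_right) Set.inter_subset_left (fun l hl => ?_)
    ⟨lmax, h.mono (spanningCoe_levelSub_of_forall_le fun e => hlmax ⟨e, rfl⟩).ge⟩
  refine ⟨sSup (F '' {e | F e ≤ l}), ⟨?_, _, rfl⟩,
    csSup_le' (Set.forall_mem_image.2 fun _ h => h)⟩
  show (levelSub G F _).spanningCoe.Reachable x y
  rwa [levelSub_sSup_image_le]

theorem connVal_le_iff [Finite V] {l : NNReal} {x y : V} (h : G.Reachable x y) :
    connVal G F x y ≤ l ↔ (levelSub G F l).spanningCoe.Reachable x y :=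
  ⟨fun hl => (reachable_levelSub_connVal h).levelSub_mono hl, connVal_le⟩

theorem connVal_le_max [Finite V] {x y z : V} (hxz : G.Reachable x z) (hzy : G.Reachable z y) :
    connVal G F x y ≤ max (connVal G F x z) (connVal G F z y) :=
  connVal_le <| ((reachable_levelSub_connVal hxz).levelSub_mono (le_max_left _ _)).trans
    ((reachable_levelSub_connVal hzy).levelSub_mono (le_max_right _ _))

theorem connValSub_comm (X Y : G.Subgraph) : connValSub G F X Y = connValSub G F Y X := by
  simp only [connValSub]
  congr 1
  ext l
  constructor <;>
  · rintro ⟨x, hx, y, hy, rfl⟩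
    exact ⟨y, hy, x, hx, connVal_comm y x⟩

theorem connValSub_le {X Y : G.Subgraph} {x y : V} (hx : x ∈ X.verts) (hy : y ∈ Y.verts) :
    connValSub G F X Y ≤ connVal G F x y :=
  csInf_le (OrderBot.bddBelow _) ⟨x, hx, y, hy, rfl⟩

theorem connValSub_self {X : G.Subgraph} (hX : X.verts.Nonempty) : connValSub G F X X = 0 := by
  obtain ⟨x, hx⟩ := hX
  exact nonpos_iff_eq_zero.1 ((connValSub_le hx hx).trans_eq (connVal_self x))

theorem exists_connVal_eq_connValSub [Finite V] {X Y : G.Subgraph} (hX : X.verts.Nonempty)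
    (hY : Y.verts.Nonempty) :
    ∃ x ∈ X.verts, ∃ y ∈ Y.verts, connVal G F x y = connValSub G F X Y := by
  obtain ⟨x, hx⟩ := hX
  obtain ⟨y, hy⟩ := hY
  set P := {l | ∃ x ∈ X.verts, ∃ y ∈ Y.verts, connVal G F x y = l}
  have hfin : P.Finite := by
    refine (Set.finite_range fun p : V × V => connVal G F p.1 p.2).subset ?_
    rintro _ ⟨x, -, y, -, rfl⟩
    exact ⟨(x, y), rfl⟩
  exact Set.Nonempty.csInf_mem (s := P) ⟨_, x, hx, y, hy, rfl⟩ hfin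

namespace IsCompAt

variable {l : NNReal} {C : G.Subgraph}

theorem nonempty (hC : IsCompAt G F l C) : C.verts.Nonempty := by
  obtain ⟨x, hx, rfl⟩ := hC
  exact ⟨x, hx, SimpleGraph.Reachable.refl x⟩

theorem connVal_le (hC : IsCompAt G F l C) {z z' : V} (hz : z ∈ C.verts) (hz' : z' ∈ C.verts) :
    connVal G F z z' ≤ l := by
  obtain ⟨x, -, rfl⟩ := hC
  exact _root_.connVal_le (reachable_of_mem_compOf hz hz')

theorem lt_connVal [Finite V] (hC : IsCompAt G F l C) {x z : V} (hz : z ∈ C.verts)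
    (hx : x ∉ C.verts) (hxz : G.Reachable x z) : l < connVal G F x z := by
  obtain ⟨x₀, -, rfl⟩ := hC
  by_contra! hle
  exact hx (mem_compOf_of_reachable hz ((connVal_le_iff hxz).1 hle).symm)

end IsCompAt

/-- An edge of the lower component lies in the upper one, so its weight is at least the upper
level. -/
theorem compOf_levelSub_eq_of_le {l l' : NNReal} (hl : l ≤ l') {x y v : V}
    (hx : x ∈ (levelSub G F l).verts)
    (hY : ∀ l₁ < l', ∀ e ∈ (compOf G (levelSub G F l') y).edgeSet, ¬ F e ≤ l₁)
    (hvX : v ∈ (compOf G (levelSub G F l) x).verts)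
    (hvY : v ∈ (compOf G (levelSub G F l') y).verts) :
    compOf G (levelSub G F l) x = compOf G (levelSub G F l') y := by
  have hXY := compOf_le_compOf (levelSub_mono G F hl) hvX hvY
  obtain ⟨w, hxw, hFw⟩ := hx
  have hedge : s(x, w) ∈ (compOf G (levelSub G F l') y).edgeSet :=
    Subgraph.edgeSet_mono hXY ⟨⟨hxw, hFw⟩, SimpleGraph.Reachable.refl x⟩
  obtain rfl : l = l' :=
    le_antisymm hl (not_lt.1 fun hlt => hY _ (hlt.trans_le' hFw) _ hedge le_rfl)
  exact le_antisymm hXY (compOf_le_compOf le_rfl hvY hvX)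

namespace IsMinimum

variable {X Y Z : G.Subgraph}

theorem isCompAt (hX : IsMinimum G F X) : ∃ l, IsCompAt G F l X := by
  obtain ⟨l, x, hx, hX, -⟩ := hX
  exact ⟨l, x, hx, hX⟩

theorem nonempty (hX : IsMinimum G F X) : X.verts.Nonempty :=
  hX.isCompAt.elim fun _ hl => hl.nonempty

theorem eq_of_mem_verts (hX : IsMinimum G F X) (hY : IsMinimum G F Y) {v : V}
    (hvX : v ∈ X.verts) (hvY : v ∈ Y.verts) : X = Y := by
  obtain ⟨l, x, hx, rfl, hXmin⟩ := hX
  obtain ⟨l', y, hy, rfl, hYmin⟩ := hY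
  rcases le_total l l' with hl | hl
  · exact compOf_levelSub_eq_of_le hl hx hYmin hvX hvY
  · exact (compOf_levelSub_eq_of_le hl hy hXmin hvY hvX).symm

theorem eq_of_connValSub_eq_zero [Finite V] (hG : G.Preconnected) (hX : IsMinimum G F X)
    (hY : IsMinimum G F Y) (h : connValSub G F X Y = 0) : X = Y := by
  by_contra hXY
  obtain ⟨l, hYl⟩ := hY.isCompAt
  obtain ⟨x, hx, y, hy, hxy⟩ := exists_connVal_eq_connValSub (F := F) hX.nonempty hY.nonempty
  have hxY : x ∉ Y.verts := fun hxY => hXY (hX.eq_of_mem_verts hY hx hxY)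
  exact not_lt_zero ((hYl.lt_connVal hy hxY (hG x y)).trans_eq (hxy.trans h))

theorem connValSub_le_max [Finite V] (hG : G.Preconnected) (hX : IsMinimum G F X)
    (hY : IsMinimum G F Y) (hZ : IsMinimum G F Z) :
    connValSub G F X Y ≤ max (connValSub G F X Z) (connValSub G F Z Y) := by
  by_cases hXZ : X = Z
  · subst hXZ
    exact le_max_right _ _
  obtain ⟨l, hZl⟩ := hZ.isCompAt
  obtain ⟨x, hx, z, hz, hxz⟩ := exists_connVal_eq_connValSub (F := F) hX.nonempty hZl.nonempty
  obtain ⟨z', hz', y, hy, hz'y⟩ :=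
    exists_connVal_eq_connValSub (F := F) hZl.nonempty hY.nonempty
  have hxZ : x ∉ Z.verts := fun hxZ => hXZ (hX.eq_of_mem_verts hZ hx hxZ)
  have hxz' : connVal G F x z' ≤ connVal G F x z := by
    refine (connVal_le_max (hG x z) (hG z z')).trans_eq (max_eq_left ?_)
    exact (hZl.connVal_le hz hz').trans (hZl.lt_connVal hz hxZ (hG x z)).le
  calc connValSub G F X Y ≤ connVal G F x y := connValSub_le hx hy
    _ ≤ max (connVal G F x z') (connVal G F z' y) := connVal_le_max (hG x z') (hG z' y)
    _ ≤ max (connValSub G F X Z) (connValSub G F Z Y) := by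
      rw [← hxz, ← hz'y]
      exact max_le_max_right _ hxz'

end IsMinimum

end

theorem stmt5 (G : SimpleGraph V) (hG : G.Connected) (F : Sym2 V → NNReal) :
    (∀ X Y : G.Subgraph, IsMinimum G F X → IsMinimum G F Y →
      connValSub G F X Y = connValSub G F Y X) ∧
    (∀ X : G.Subgraph, IsMinimum G F X → connValSub G F X X = 0) ∧
    (∀ X Y : G.Subgraph, IsMinimum G F X → IsMinimum G F Y →
      connValSub G F X Y = 0 → X = Y) ∧
    (∀ X Y Z : G.Subgraph, IsMinimum G F X → IsMinimum G F Y → IsMinimum G F Z →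
      connValSub G F X Y ≤ max (connValSub G F X Z) (connValSub G F Z Y)) :=
  ⟨fun X Y _ _ => connValSub_comm X Y,
    fun _ hX => connValSub_self hX.nonempty,
    fun _ _ hX hY => hX.eq_of_connValSub_eq_zero hG.preconnected hY,
    fun _ _ _ hX hY hZ => hX.connValSub_le_max hG.preconnected hY hZ⟩
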